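/- arXiv:1307.8305 — 4 statements merged into one kernel-verified Lean document; each statement's English description precedes it below -/
import Mathlib

section
/- The gap function ψ, considered as a function on the set R \ R* of non-optimal feasible points (with the subspace topology from ℝ^ℓ), is lower semi-continuous, and moreover ψ(α) > 0 for every α ∈ R \ R*. -/
open Matrix Filter Topology ENNReal

namespace SMO

noncomputable section

variable {l : ℕ}

/-- The dual SVM objective `f(α) = yᵀα − (1/2) αᵀKα`. -/
def obj (y : Fin l → ℝ) (K : Matrix (Fin l) (Fin l) ℝ) (α : Fin l → ℝ) : ℝ :=
  y ⬝ᵥ α - (1 / 2) * (α ⬝ᵥ (K *ᵥ α))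

/-- The gradient `∇f(α) = y − Kα`. -/
def grad (y : Fin l → ℝ) (K : Matrix (Fin l) (Fin l) ℝ) (α : Fin l → ℝ) : Fin l → ℝ :=
  y - K *ᵥ α

/-- The direction `v_B = e_i − e_j` of a working set `B = (i, j)`. -/
def dir (B : Fin l × Fin l) : Fin l → ℝ :=
  Pi.single B.1 1 - Pi.single B.2 1

/-- Lower bound `L_i = min {0, y_i C}`. -/
def lb (y : Fin l → ℝ) (C : ℝ) (i : Fin l) : ℝ := min 0 (y i * C)

/-- Upper bound `U_i = max {0, y_i C}`. -/
def ub (y : Fin l → ℝ) (C : ℝ) (i : Fin l) : ℝ := max 0 (y i * C)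

/-- The feasible region `R`. -/
def feas (y : Fin l → ℝ) (C : ℝ) : Set (Fin l → ℝ) :=
  {α | (∑ i, α i) = 0 ∧ ∀ i, lb y C i ≤ α i ∧ α i ≤ ub y C i}

/-- `I_up(α) = {i : α_i < U_i}`. -/
def Iup (y : Fin l → ℝ) (C : ℝ) (α : Fin l → ℝ) : Set (Fin l) := {i | α i < ub y C i}

/-- `I_down(α) = {i : α_i > L_i}`. -/
def Idown (y : Fin l → ℝ) (C : ℝ) (α : Fin l → ℝ) : Set (Fin l) := {i | lb y C i < α i}

/-- The set `B(α)` of working sets feasible at `α`. -/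
def wsets (y : Fin l → ℝ) (C : ℝ) (α : Fin l → ℝ) : Set (Fin l × Fin l) :=
  {B | B.1 ∈ Iup y C α ∧ B.2 ∈ Idown y C α ∧ B.1 ≠ B.2}

/-- The optimal value `f* = max {f(α) : α ∈ R}`. -/
def fstar (y : Fin l → ℝ) (K : Matrix (Fin l) (Fin l) ℝ) (C : ℝ) : ℝ :=
  sSup (obj y K '' feas y C)

/-- The optimal set `R* = {α ∈ R : f(α) = f*}`. -/
def opt (y : Fin l → ℝ) (K : Matrix (Fin l) (Fin l) ℝ) (C : ℝ) : Set (Fin l → ℝ) :=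
  {α ∈ feas y C | obj y K α = fstar y K C}

/-- The gap function `ψ(α) = max {v_Bᵀ ∇f(α) : B ∈ B(α)}`. -/
def psi (y : Fin l → ℝ) (K : Matrix (Fin l) (Fin l) ℝ) (C : ℝ) (α : Fin l → ℝ) : ℝ :=
  sSup ((fun B => dir B ⬝ᵥ grad y K α) '' wsets y C α)

/-- The Newton-step gain `g̃_B(α) = (v_Bᵀ∇f(α))² / (2 v_BᵀKv_B) ∈ [0, ∞]`, with the
conventions `g̃_B(α) = 0` if `v_BᵀKv_B = 0` and `v_Bᵀ∇f(α) = 0`, and `g̃_B(α) = ∞` if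
`v_BᵀKv_B = 0` and `v_Bᵀ∇f(α) ≠ 0`. -/
def ngain (y : Fin l → ℝ) (K : Matrix (Fin l) (Fin l) ℝ) (B : Fin l × Fin l)
    (α : Fin l → ℝ) : ℝ≥0∞ :=
  if dir B ⬝ᵥ (K *ᵥ dir B) = 0 then
    (if dir B ⬝ᵥ grad y K α = 0 then 0 else ⊤)
  else ENNReal.ofReal ((dir B ⬝ᵥ grad y K α) ^ 2 / (2 * (dir B ⬝ᵥ (K *ᵥ dir B))))

/-- A second-order working set selection: on every non-optimal feasible `α` it returns a
working set `W(α) = (i, j) ∈ B(α)` such that `i` maximizes `(∇f(α))_n` over `n ∈ I_up(α)`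
and `j` maximizes `g̃_{(i,n)}(α)` over `n ∈ I_down(α) \ {i}`. -/
def IsSecondOrderWSS (y : Fin l → ℝ) (K : Matrix (Fin l) (Fin l) ℝ) (C : ℝ)
    (W : (Fin l → ℝ) → Fin l × Fin l) : Prop :=
  ∀ α ∈ feas y C \ opt y K C,
    W α ∈ wsets y C α ∧
    (∀ n ∈ Iup y C α, grad y K α n ≤ grad y K α (W α).1) ∧
    (∀ n ∈ Idown y C α, n ≠ (W α).1 → ngain y K ((W α).1, n) α ≤ ngain y K (W α) α)

/-!
Since `f` is concave, a feasible `α` at which no `v_B` with `B ∈ B(α)` is an ascent direction is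
optimal: some level `M` separates `∇f(α)` on `I_up(α)` from `∇f(α)` on `I_down(α)`; for feasible
`β` the difference `β − α` has zero sum, is positive only on `I_up(α)` and negative only on
`I_down(α)`, so `∇f(α)ᵀ(β − α) ≤ 0` and `f(β) ≤ f(α)`. Hence `ψ > 0` off `R*`. Lower
semicontinuity holds because `ψ` is the maximum of the finitely many continuous functions
`α ↦ v_Bᵀ∇f(α)`, each taken over the open set of `α` with `B ∈ B(α)`.
-/

theorem exists_mem_upperBounds_inter_lowerBounds {β : Type*} [ConditionallyCompleteLattice β]
    [Nonempty β] {S T : Set β} (hS : S.Finite) (hT : T.Finite) (h : ∀ s ∈ S, ∀ t ∈ T, s ≤ t) :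
    (upperBounds S ∩ lowerBounds T).Nonempty := by
  rcases S.eq_empty_or_nonempty with rfl | hne
  · obtain ⟨M, hM⟩ := hT.bddBelow
    exact ⟨M, by simp, hM⟩
  · exact ⟨sSup S, fun s hs => le_csSup hS.bddAbove hs,
      fun t ht => csSup_le hne fun s hs => h s hs t ht⟩

theorem sum_mul_nonpos_of_sum_eq_zero {ι : Type*} (s : Finset ι) {g d : ι → ℝ} {M : ℝ}
    (hd : ∑ i ∈ s, d i = 0) (hpos : ∀ i ∈ s, 0 < d i → g i ≤ M)
    (hneg : ∀ i ∈ s, d i < 0 → M ≤ g i) :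
    ∑ i ∈ s, g i * d i ≤ 0 := by
  have hshift : ∑ i ∈ s, g i * d i = ∑ i ∈ s, (g i - M) * d i := by
    simp only [sub_mul, Finset.sum_sub_distrib, ← Finset.mul_sum, hd, mul_zero, sub_zero]
  rw [hshift]
  refine Finset.sum_nonpos fun i hi => ?_
  rcases lt_trichotomy (d i) 0 with hlt | heq | hgt
  · exact mul_nonpos_of_nonneg_of_nonpos (sub_nonneg.2 (hneg i hi hlt)) hlt.le
  · simp [heq]
  · exact mul_nonpos_of_nonpos_of_nonneg (sub_nonpos.2 (hpos i hi hgt)) hgt.le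

theorem lowerSemicontinuousAt_sSup_image {X ι γ : Type*} [TopologicalSpace X] [Finite ι]
    [ConditionallyCompleteLinearOrder γ] {g : ι → X → γ} {A : X → Set ι} {x : X}
    (hg : ∀ i ∈ A x, LowerSemicontinuousAt (g i) x) (hA : ∀ i ∈ A x, ∀ᶠ z in 𝓝 x, i ∈ A z)
    (hne : (A x).Nonempty) :
    LowerSemicontinuousAt (fun z => sSup ((fun i => g i z) '' A z)) x := by
  intro t ht
  have : Nonempty γ := ⟨t⟩
  obtain ⟨_, ⟨i, hi, rfl⟩, hti⟩ := exists_lt_of_lt_csSup (hne.image _) ht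
  filter_upwards [hg i hi t hti, hA i hi] with z hz hiz
  exact hz.trans_le (le_csSup (Set.toFinite _).bddAbove ⟨i, hiz, rfl⟩)

section

variable {y : Fin l → ℝ} {K : Matrix (Fin l) (Fin l) ℝ} {C : ℝ} {α β : Fin l → ℝ}

lemma dir_dotProduct (i j : Fin l) (v : Fin l → ℝ) : dir (i, j) ⬝ᵥ v = v i - v j := by
  simp [dir, sub_dotProduct]

lemma obj_add (hK : K.IsSymm) (α d : Fin l → ℝ) :
    obj y K (α + d) = obj y K α + grad y K α ⬝ᵥ d - 1 / 2 * (d ⬝ᵥ (K *ᵥ d)) := by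
  have hswap : α ⬝ᵥ (K *ᵥ d) = d ⬝ᵥ (K *ᵥ α) := by
    rw [dotProduct_mulVec, ← mulVec_transpose, hK.eq, dotProduct_comm]
  simp only [obj, grad, mulVec_add, dotProduct_add, add_dotProduct, sub_dotProduct, hswap,
    dotProduct_comm (K *ᵥ α) d]
  ring

lemma obj_le_add_grad_dotProduct (hK : K.PosSemidef) (α β : Fin l → ℝ) :
    obj y K β ≤ obj y K α + grad y K α ⬝ᵥ (β - α) := by
  have hquad : 0 ≤ (β - α) ⬝ᵥ (K *ᵥ (β - α)) := by
    simpa using hK.dotProduct_mulVec_nonneg (β - α)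
  have hexpand := obj_add (y := y) (by simpa using hK.isHermitian) α (β - α)
  rw [add_sub_cancel] at hexpand
  linarith

lemma mem_Iup_of_lt (hβ : β ∈ feas y C) {k : Fin l} (h : α k < β k) : k ∈ Iup y C α :=
  h.trans_le (hβ.2 k).2

lemma mem_Idown_of_lt (hβ : β ∈ feas y C) {k : Fin l} (h : β k < α k) : k ∈ Idown y C α :=
  (hβ.2 k).1.trans_lt h

lemma exists_grad_separation (h : ∀ B ∈ wsets y C α, dir B ⬝ᵥ grad y K α ≤ 0) :
    ∃ M, (∀ i ∈ Iup y C α, grad y K α i ≤ M) ∧ ∀ j ∈ Idown y C α, M ≤ grad y K α j := by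
  set G := grad y K α
  have hle : ∀ i ∈ Iup y C α, ∀ j ∈ Idown y C α, G i ≤ G j := by
    intro i hi j hj
    rcases eq_or_ne i j with rfl | hij
    · exact le_rfl
    · have := h (i, j) ⟨hi, hj, hij⟩
      rw [dir_dotProduct] at this
      linarith
  obtain ⟨M, hup, hdown⟩ := exists_mem_upperBounds_inter_lowerBounds
    (Set.toFinite (G '' Iup y C α)) (Set.toFinite (G '' Idown y C α))
    (by rintro _ ⟨i, hi, rfl⟩ _ ⟨j, hj, rfl⟩; exact hle i hi j hj)
  exact ⟨M, fun i hi => hup ⟨i, hi, rfl⟩, fun j hj => hdown ⟨j, hj, rfl⟩⟩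

lemma obj_le_of_forall_dir_grad_nonpos (hK : K.PosSemidef) (hα : α ∈ feas y C)
    (h : ∀ B ∈ wsets y C α, dir B ⬝ᵥ grad y K α ≤ 0) (hβ : β ∈ feas y C) :
    obj y K β ≤ obj y K α := by
  obtain ⟨M, hup, hdown⟩ := exists_grad_separation h
  have hsum : ∑ k, (β - α) k = 0 := by
    simp [Finset.sum_sub_distrib, hα.1, hβ.1]
  have hascent : grad y K α ⬝ᵥ (β - α) ≤ 0 :=
    sum_mul_nonpos_of_sum_eq_zero _ hsum
      (fun k _ hk => hup k (mem_Iup_of_lt hβ (sub_pos.1 hk)))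
      (fun k _ hk => hdown k (mem_Idown_of_lt hβ (sub_neg.1 hk)))
  linarith [obj_le_add_grad_dotProduct (y := y) hK α β]

lemma mem_opt_of_forall_dir_grad_nonpos (hK : K.PosSemidef) (hα : α ∈ feas y C)
    (h : ∀ B ∈ wsets y C α, dir B ⬝ᵥ grad y K α ≤ 0) : α ∈ opt y K C := by
  have hgreatest : IsGreatest (obj y K '' feas y C) (obj y K α) :=
    ⟨⟨α, hα, rfl⟩, by rintro _ ⟨β, hβ, rfl⟩; exact obj_le_of_forall_dir_grad_nonpos hK hα h hβ⟩
  exact ⟨hα, hgreatest.csSup_eq.symm⟩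

lemma exists_mem_wsets_dir_grad_pos (hK : K.PosSemidef) (hα : α ∈ feas y C \ opt y K C) :
    ∃ B ∈ wsets y C α, 0 < dir B ⬝ᵥ grad y K α := by
  by_contra! h
  exact hα.2 (mem_opt_of_forall_dir_grad_nonpos hK hα.1 h)

lemma le_psi {B : Fin l × Fin l} (hB : B ∈ wsets y C α) : dir B ⬝ᵥ grad y K α ≤ psi y K C α :=
  le_csSup (Set.toFinite _).bddAbove ⟨B, hB, rfl⟩

lemma psi_pos (hK : K.PosSemidef) (hα : α ∈ feas y C \ opt y K C) : 0 < psi y K C α := by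
  obtain ⟨B, hB, hpos⟩ := exists_mem_wsets_dir_grad_pos hK hα
  exact hpos.trans_le (le_psi hB)

lemma continuous_dir_dotProduct_grad (B : Fin l × Fin l) :
    Continuous fun α => dir B ⬝ᵥ grad y K α := by
  simp only [dotProduct, grad, Pi.sub_apply, mulVec]
  fun_prop

lemma isOpen_setOf_mem_wsets (B : Fin l × Fin l) : IsOpen {α | B ∈ wsets y C α} :=
  (isOpen_lt (continuous_apply B.1) continuous_const).inter
    ((isOpen_lt continuous_const (continuous_apply B.2)).inter isOpen_const)

lemma lowerSemicontinuousAt_psi (hne : (wsets y C α).Nonempty) :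
    LowerSemicontinuousAt (psi y K C) α :=
  lowerSemicontinuousAt_sSup_image (g := fun B α => dir B ⬝ᵥ grad y K α)
    (fun B _ => (continuous_dir_dotProduct_grad B).continuousAt.lowerSemicontinuousAt)
    (fun B hB => (isOpen_setOf_mem_wsets B).mem_nhds hB) hne

end

theorem psi_lowerSemicontinuousOn_and_pos_general
    (y : Fin l → ℝ)
    (K : Matrix (Fin l) (Fin l) ℝ) (hK : K.PosSemidef) (C : ℝ) :
    LowerSemicontinuousOn (psi y K C) (feas y C \ opt y K C) ∧
    ∀ α ∈ feas y C \ opt y K C, 0 < psi y K C α := by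
  refine ⟨fun α hα => ?_, fun α hα => psi_pos hK hα⟩
  obtain ⟨B, hB, -⟩ := exists_mem_wsets_dir_grad_pos hK hα
  exact (lowerSemicontinuousAt_psi ⟨B, hB⟩).lowerSemicontinuousWithinAt _

/-- The gap function `ψ`, considered as a function on the set `R \ R*` of
non-optimal feasible points (with the subspace topology), is lower semi-continuous, and
moreover `ψ(α) > 0` for every `α ∈ R \ R*`. -/
theorem psi_lowerSemicontinuousOn_and_pos
    (hl : 2 ≤ l) (y : Fin l → ℝ) (hy : ∀ i, y i = 1 ∨ y i = -1)
    (K : Matrix (Fin l) (Fin l) ℝ) (hK : K.PosSemidef) (C : ℝ) (hC : 0 < C) :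
    LowerSemicontinuousOn (psi y K C) (feas y C \ opt y K C) ∧
    ∀ α ∈ feas y C \ opt y K C, 0 < psi y K C α :=
  psi_lowerSemicontinuousOn_and_pos_general y K hK C

end

end SMO
end

section
/- Let α ∈ ℝ^ℓ, let B be a working set with Q := v_BᵀKv_B > 0 and l := v_Bᵀ∇f(α) ≠ 0, set μ* = l/Q and g̃* = l²/(2Q), and let η ∈ (0,1). Then for every μ ∈ ℝ with 1 − η ≤ μ/μ* ≤ 1 + η one has f(α + μ v_B) − f(α) ≥ (1 − η²) · g̃* > 0. -/
open Matrix Filter Topology ENNReal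

namespace SMO

noncomputable section

variable {l : ℕ}

/-!
Along `v_B` the objective is the concave quadratic `μ ↦ μ l − μ² Q / 2`, maximized by the Newton
step `μ* = l / Q` with gain `g̃* = l² / (2Q)`. At `μ = t μ*` the gain is `(1 − (1 − t)²) g̃*`,
which is at least `(1 − η²) g̃*` as soon as `|1 − t| ≤ η`.
-/

lemma obj_add_smul_sub_obj (y : Fin l → ℝ) {K : Matrix (Fin l) (Fin l) ℝ} (hK : K.IsSymm)
    (α v : Fin l → ℝ) (μ : ℝ) :
    obj y K (α + μ • v) - obj y K α
      = μ * (v ⬝ᵥ grad y K α) - μ ^ 2 / 2 * (v ⬝ᵥ (K *ᵥ v)) := by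
  have hswap : α ⬝ᵥ (K *ᵥ v) = v ⬝ᵥ (K *ᵥ α) := by
    rw [dotProduct_mulVec, ← mulVec_transpose, hK, dotProduct_comm]
  simp only [obj, grad, mulVec_add, mulVec_smul, dotProduct_add, add_dotProduct,
    dotProduct_smul, smul_dotProduct, smul_eq_mul, dotProduct_sub]
  rw [hswap, dotProduct_comm y v]
  ring

lemma quadratic_gain_at_scaled_newton_step {𝕜 : Type*} [Field 𝕜] [NeZero (2 : 𝕜)] {Q : 𝕜}
    (hQ : Q ≠ 0) (lv t : 𝕜) :
    t * (lv / Q) * lv - (t * (lv / Q)) ^ 2 / 2 * Q = (1 - (1 - t) ^ 2) * (lv ^ 2 / (2 * Q)) := by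
  field_simp
  ring

theorem step_gain_near_newton_general
    (y : Fin l → ℝ)
    (K : Matrix (Fin l) (Fin l) ℝ) (hK : K.PosSemidef)
    (α : Fin l → ℝ) (B : Fin l × Fin l)
    (Q lv μstar gstar : ℝ)
    (hQ : Q = dir B ⬝ᵥ (K *ᵥ dir B)) (hQpos : 0 < Q)
    (hlv : lv = dir B ⬝ᵥ grad y K α) (hlvne : lv ≠ 0)
    (hμstar : μstar = lv / Q) (hgstar : gstar = lv ^ 2 / (2 * Q))
    (η : ℝ) (hη : η ∈ Set.Ioo (0 : ℝ) 1) :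
    ∀ μ : ℝ, 1 - η ≤ μ / μstar → μ / μstar ≤ 1 + η →
      (1 - η ^ 2) * gstar ≤ obj y K (α + μ • dir B) - obj y K α ∧
      0 < (1 - η ^ 2) * gstar := by
  intro μ hlow hupp
  obtain ⟨hη0, hη1⟩ := hη
  have hμstar_ne : μstar ≠ 0 := hμstar ▸ div_ne_zero hlvne hQpos.ne'
  have hgstar_pos : 0 < gstar := by rw [hgstar]; positivity
  have hgain : obj y K (α + μ • dir B) - obj y K α = (1 - (1 - μ / μstar) ^ 2) * gstar := by
    rw [obj_add_smul_sub_obj y (K := K) hK.isHermitian, ← hlv, ← hQ, hgstar,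
      ← quadratic_gain_at_scaled_newton_step hQpos.ne', ← hμstar, div_mul_cancel₀ μ hμstar_ne]
  have hsq : (1 - μ / μstar) ^ 2 ≤ η ^ 2 := sq_le_sq' (by linarith) (by linarith)
  refine ⟨?_, mul_pos (by nlinarith) hgstar_pos⟩
  rw [hgain]
  gcongr

/-- With `Q = v_BᵀKv_B > 0`, `l = v_Bᵀ∇f(α) ≠ 0`, `μ* = l/Q`,
`g̃* = l²/(2Q)` and `η ∈ (0,1)`: every `μ` with `1 − η ≤ μ/μ* ≤ 1 + η` satisfies
`f(α + μ v_B) − f(α) ≥ (1 − η²) · g̃* > 0`. -/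
theorem step_gain_near_newton
    (hl : 2 ≤ l) (y : Fin l → ℝ) (hy : ∀ i, y i = 1 ∨ y i = -1)
    (K : Matrix (Fin l) (Fin l) ℝ) (hK : K.PosSemidef)
    (α : Fin l → ℝ) (B : Fin l × Fin l) (hB : B.1 ≠ B.2)
    (Q lv μstar gstar : ℝ)
    (hQ : Q = dir B ⬝ᵥ (K *ᵥ dir B)) (hQpos : 0 < Q)
    (hlv : lv = dir B ⬝ᵥ grad y K α) (hlvne : lv ≠ 0)
    (hμstar : μstar = lv / Q) (hgstar : gstar = lv ^ 2 / (2 * Q))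
    (η : ℝ) (hη : η ∈ Set.Ioo (0 : ℝ) 1) :
    ∀ μ : ℝ, 1 - η ≤ μ / μstar → μ / μstar ≤ 1 + η →
      (1 - η ^ 2) * gstar ≤ obj y K (α + μ • dir B) - obj y K α ∧
      0 < (1 - η ^ 2) * gstar :=
  step_gain_near_newton_general y K hK α B Q lv μstar gstar hQ hQpos hlv hlvne hμstar hgstar η hη

end

end SMO
end

section
/- Let α ∈ ℝ^ℓ and let B₁, B₂ be working sets with Q₂₂ := v_{B₂}ᵀKv_{B₂} > 0. Set w₁ = v_{B₁}ᵀ∇f(α), w₂ = v_{B₂}ᵀ∇f(α), Q₁₁ = v_{B₁}ᵀKv_{B₁}, Q₁₂ = v_{B₁}ᵀKv_{B₂}, and let Q be the 2×2 matrix with rows (Q₁₁, Q₁₂) and (Q₁₂, Q₂₂). For any μ₁ ∈ ℝ define the follow-up Newton step μ₂ = (w₂ − Q₁₂ μ₁)/Q₂₂. Then the two-step gain satisfies f(α + μ₁ v_{B₁} + μ₂ v_{B₂}) − f(α) = −(det(Q)/(2Q₂₂)) μ₁² + ((Q₂₂ w₁ − Q₁₂ w₂)/Q₂₂) μ₁ +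 w₂²/(2Q₂₂). -/
open Matrix Filter Topology ENNReal

namespace SMO

noncomputable section

variable {l : ℕ}

lemma _root_.Matrix.IsSymm.dotProduct_mulVec_comm {n R : Type*} [Fintype n] [CommSemiring R]
    {K : Matrix n n R} (hK : K.IsSymm) (u v : n → R) : u ⬝ᵥ (K *ᵥ v) = v ⬝ᵥ (K *ᵥ u) := by
  simpa only [hK.eq] using dotProduct_transpose_mulVec K u v

lemma quadForm_add_smul {n R : Type*} [Fintype n] [CommRing R] {K : Matrix n n R}
    (hK : K.IsSymm) (u v : n → R) (a b : R) :
    (a • u + b • v) ⬝ᵥ (K *ᵥ (a • u + b • v)) =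
      a ^ 2 * (u ⬝ᵥ (K *ᵥ u)) + 2 * a * b * (u ⬝ᵥ (K *ᵥ v)) + b ^ 2 * (v ⬝ᵥ (K *ᵥ v)) := by
  simp only [mulVec_add, mulVec_smul, dotProduct_add, add_dotProduct, dotProduct_smul,
    smul_dotProduct, smul_eq_mul, hK.dotProduct_mulVec_comm v u]
  ring

lemma obj_add_sub_obj (y : Fin l → ℝ) {K : Matrix (Fin l) (Fin l) ℝ} (hK : K.IsSymm)
    (α d : Fin l → ℝ) :
    obj y K (α + d) - obj y K α = d ⬝ᵥ grad y K α - (1 / 2) * (d ⬝ᵥ (K *ᵥ d)) := by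
  simp only [obj, grad, mulVec_add, dotProduct_add, add_dotProduct, dotProduct_sub,
    hK.dotProduct_mulVec_comm d α, dotProduct_comm d y]
  ring

/-- After a step `μ₁` along the first direction, the exact line search along the second
direction leaves a gain that is quadratic in `μ₁` alone, with leading coefficient given by the
Schur complement `det Q / Q₂₂`. -/
lemma twoStep_quadratic_gain_eq {w₁ w₂ Q₁₁ Q₁₂ Q₂₂ : ℝ} (hQ₂₂ : Q₂₂ ≠ 0) (μ₁ : ℝ) :
    let μ₂ := (w₂ - Q₁₂ * μ₁) / Q₂₂
    μ₁ * w₁ + μ₂ * w₂ - (1 / 2) * (μ₁ ^ 2 * Q₁₁ + 2 * μ₁ * μ₂ * Q₁₂ + μ₂ ^ 2 * Q₂₂) =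
      -((!![Q₁₁, Q₁₂; Q₁₂, Q₂₂] : Matrix (Fin 2) (Fin 2) ℝ).det / (2 * Q₂₂)) * μ₁ ^ 2 +
        ((Q₂₂ * w₁ - Q₁₂ * w₂) / Q₂₂) * μ₁ + w₂ ^ 2 / (2 * Q₂₂) := by
  rw [det_fin_two_of]
  field_simp
  ring

theorem two_step_gain_formula_general
    (y : Fin l → ℝ)
    (K : Matrix (Fin l) (Fin l) ℝ) (hK : K.PosSemidef)
    (α : Fin l → ℝ) (B₁ B₂ : Fin l × Fin l)
    (w₁ w₂ Q₁₁ Q₁₂ Q₂₂ : ℝ)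
    (hw₁ : w₁ = dir B₁ ⬝ᵥ grad y K α)
    (hw₂ : w₂ = dir B₂ ⬝ᵥ grad y K α)
    (hQ₁₁ : Q₁₁ = dir B₁ ⬝ᵥ (K *ᵥ dir B₁))
    (hQ₁₂ : Q₁₂ = dir B₁ ⬝ᵥ (K *ᵥ dir B₂))
    (hQ₂₂ : Q₂₂ = dir B₂ ⬝ᵥ (K *ᵥ dir B₂)) (hQ₂₂pos : 0 < Q₂₂) :
    ∀ μ₁ : ℝ,
      obj y K (α + μ₁ • dir B₁ + ((w₂ - Q₁₂ * μ₁) / Q₂₂) • dir B₂) - obj y K α =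
        -((!![Q₁₁, Q₁₂; Q₁₂, Q₂₂] : Matrix (Fin 2) (Fin 2) ℝ).det / (2 * Q₂₂)) * μ₁ ^ 2 +
          ((Q₂₂ * w₁ - Q₁₂ * w₂) / Q₂₂) * μ₁ + w₂ ^ 2 / (2 * Q₂₂) := by
  intro μ₁
  have hKsymm : K.IsSymm := isHermitian_iff_isSymm.mp hK.isHermitian
  set μ₂ := (w₂ - Q₁₂ * μ₁) / Q₂₂
  have hstep : (μ₁ • dir B₁ + μ₂ • dir B₂) ⬝ᵥ grad y K α = μ₁ * w₁ + μ₂ * w₂ := by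
    simp only [add_dotProduct, smul_dotProduct, smul_eq_mul, hw₁, hw₂]
  rw [add_assoc, obj_add_sub_obj y hKsymm, hstep, quadForm_add_smul hKsymm,
    ← hQ₁₁, ← hQ₁₂, ← hQ₂₂]
  exact twoStep_quadratic_gain_eq hQ₂₂pos.ne' μ₁

/-- With `Q₂₂ > 0` and the `2×2` matrix `Q` with rows `(Q₁₁, Q₁₂)` and
`(Q₁₂, Q₂₂)`, for any `μ₁` and follow-up Newton step `μ₂ = (w₂ − Q₁₂μ₁)/Q₂₂`, the
two-step gain equals
`−(det(Q)/(2Q₂₂))μ₁² + ((Q₂₂w₁ − Q₁₂w₂)/Q₂₂)μ₁ + w₂²/(2Q₂₂)`. -/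
theorem two_step_gain_formula
    (hl : 2 ≤ l) (y : Fin l → ℝ) (hy : ∀ i, y i = 1 ∨ y i = -1)
    (K : Matrix (Fin l) (Fin l) ℝ) (hK : K.PosSemidef)
    (α : Fin l → ℝ) (B₁ B₂ : Fin l × Fin l) (hB₁ : B₁.1 ≠ B₁.2) (hB₂ : B₂.1 ≠ B₂.2)
    (w₁ w₂ Q₁₁ Q₁₂ Q₂₂ : ℝ)
    (hw₁ : w₁ = dir B₁ ⬝ᵥ grad y K α)
    (hw₂ : w₂ = dir B₂ ⬝ᵥ grad y K α)
    (hQ₁₁ : Q₁₁ = dir B₁ ⬝ᵥ (K *ᵥ dir B₁))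
    (hQ₁₂ : Q₁₂ = dir B₁ ⬝ᵥ (K *ᵥ dir B₂))
    (hQ₂₂ : Q₂₂ = dir B₂ ⬝ᵥ (K *ᵥ dir B₂)) (hQ₂₂pos : 0 < Q₂₂) :
    ∀ μ₁ : ℝ,
      obj y K (α + μ₁ • dir B₁ + ((w₂ - Q₁₂ * μ₁) / Q₂₂) • dir B₂) - obj y K α =
        -((!![Q₁₁, Q₁₂; Q₁₂, Q₂₂] : Matrix (Fin 2) (Fin 2) ℝ).det / (2 * Q₂₂)) * μ₁ ^ 2 +
          ((Q₂₂ * w₁ - Q₁₂ * w₂) / Q₂₂) * μ₁ + w₂ ^ 2 / (2 * Q₂₂) :=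
  two_step_gain_formula_general y K hK α B₁ B₂ w₁ w₂ Q₁₁ Q₁₂ Q₂₂ hw₁ hw₂ hQ₁₁ hQ₁₂ hQ₂₂ hQ₂₂pos

end

end SMO
end

section
/- Let η ∈ (0,1), let W be a second-order working set selection, and let (α^(t))_{t ∈ ℕ} be a sequence in R with (f(α^(t)))_{t ∈ ℕ} monotonically increasing. Suppose there are infinitely many t such that α^(t−1) ∉ R* and the double-step gain satisfies f(α^(t+1)) − f(α^(t−1)) ≥ (1 − η²) · g̃_W(α^(t−1)) (inequality in [0, ∞]). Then lim_{t→∞} f(α^(t)) = f*. -/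
open Matrix Filter Topology ENNReal

namespace SMO

noncomputable section

variable {l : ℕ}

/-!
The values `f(α^(t))` increase to a limit `L ≤ f*`. If `L < f*`, every iterate lies at least
`ε = f* − L` below the optimum. Concavity of `f`, together with the shape of `R` (a box cut by
the hyperplane `∑ α_i = 0`), turns this gap into a pair `(i, j) ∈ B(α)` with
`∇f(α)_i − ∇f(α)_j ≥ ε / ∑_k (U_k − L_k)`. Since `W(α)` takes `i` with maximal gradient in
`I_up(α)` and then maximizes `g̃`, this forces `g̃_W(α) ≥ γ` for a `γ > 0` independent of `α`.
Infinitely many double steps would then each gain at least `(1 − η²) γ`, which is impossible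
for a convergent sequence `f(α^(t))`.
-/

lemma finite_setOf_le_sub_of_tendsto {u : ℕ → ℝ} {L γ : ℝ} (hu : Tendsto u atTop (𝓝 L))
    (hγ : 0 < γ) (k : ℕ) : {t | γ ≤ u (t + k) - u t}.Finite := by
  have hdiff : Tendsto (fun t => u (t + k) - u t) atTop (𝓝 0) := by
    simpa using ((tendsto_add_atTop_iff_nat k).2 hu).sub hu
  have hsmall := hdiff.eventually (gt_mem_nhds hγ)
  rw [← Nat.cofinite_eq_atTop, Filter.eventually_cofinite] at hsmall
  simpa using hsmall

lemma exists_dotProduct_le_sum_max_mul {ι : Type*} [Fintype ι] {d g : ι → ℝ}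
    (hd : ∑ k, d k = 0) (hgd : 0 < g ⬝ᵥ d) :
    ∃ i j, 0 < d i ∧ d j < 0 ∧ g ⬝ᵥ d ≤ (∑ k, max (d k) 0) * (g i - g j) := by
  classical
  have hd0 : ∃ k ∈ Finset.univ, d k ≠ 0 := by
    by_contra! h
    simp [show d = 0 from funext fun k => h k (Finset.mem_univ k)] at hgd
  have hpos : (Finset.univ.filter (0 < d ·)).Nonempty := by
    obtain ⟨k, -, hk⟩ := Finset.exists_pos_of_sum_zero_of_exists_nonzero d hd hd0
    exact ⟨k, by simpa using hk⟩
  have hneg : (Finset.univ.filter (d · < 0)).Nonempty := by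
    obtain ⟨k, -, hk⟩ := Finset.exists_pos_of_sum_zero_of_exists_nonzero
      (s := Finset.univ) (-d) (by simp [hd]) (by simpa using hd0)
    exact ⟨k, by simpa using hk⟩
  obtain ⟨i, hi, hmax⟩ := Finset.exists_max_image _ g hpos
  obtain ⟨j, hj, hmin⟩ := Finset.exists_min_image _ g hneg
  simp only [Finset.mem_filter, Finset.mem_univ, true_and] at hi hj hmax hmin
  refine ⟨i, j, hi, hj, ?_⟩
  -- `∑ d = 0` lets us shift `g` by the constant `g j`.
  calc g ⬝ᵥ d = ∑ k, d k * (g k - g j) := by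
        simp [dotProduct, mul_sub, ← Finset.sum_mul, hd, mul_comm]
    _ ≤ ∑ k, max (d k) 0 * (g i - g j) := Finset.sum_le_sum fun k _ => ?_
    _ = (∑ k, max (d k) 0) * (g i - g j) := (Finset.sum_mul _ _ _).symm
  rcases lt_trichotomy (d k) 0 with h | h | h
  · rw [max_eq_right h.le, zero_mul]
    exact mul_nonpos_of_nonpos_of_nonneg h.le (sub_nonneg.2 (hmin k h))
  · simp [h]
  · rw [max_eq_left h.le]
    exact mul_le_mul_of_nonneg_left (sub_le_sub_right (hmax k h) _) h.le

lemma continuous_obj (y : Fin l → ℝ) (K : Matrix (Fin l) (Fin l) ℝ) :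
    Continuous (obj y K) := by
  unfold obj
  fun_prop

lemma isCompact_feas (y : Fin l → ℝ) (C : ℝ) : IsCompact (feas y C) := by
  have hfeas : feas y C = {α : Fin l → ℝ | ∑ i, α i = 0} ∩
      Set.univ.pi fun i => Set.Icc (lb y C i) (ub y C i) := by
    ext α
    simp only [feas, Set.mem_inter_iff, Set.mem_ofPred_eq, Set.mem_pi, Set.mem_univ,
      true_implies, Set.mem_Icc]
  rw [hfeas]
  exact (isCompact_univ_pi fun i => isCompact_Icc).inter_left
    (isClosed_eq (by fun_prop) continuous_const)

lemma zero_mem_feas (y : Fin l → ℝ) (C : ℝ) : (0 : Fin l → ℝ) ∈ feas y C :=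
  ⟨by simp, fun _ => ⟨min_le_left _ _, le_max_left _ _⟩⟩

lemma fstar_mem_image (y : Fin l → ℝ) (K : Matrix (Fin l) (Fin l) ℝ) (C : ℝ) :
    fstar y K C ∈ obj y K '' feas y C :=
  ((isCompact_feas y C).image (continuous_obj y K)).sSup_mem ⟨_, _, zero_mem_feas y C, rfl⟩

lemma obj_le_fstar (y : Fin l → ℝ) (K : Matrix (Fin l) (Fin l) ℝ) {C : ℝ} {α : Fin l → ℝ}
    (hα : α ∈ feas y C) : obj y K α ≤ fstar y K C :=
  le_csSup ((isCompact_feas y C).image (continuous_obj y K)).bddAbove ⟨α, hα, rfl⟩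

section

variable {K : Matrix (Fin l) (Fin l) ℝ}

lemma dir_dotProduct_s16 (B : Fin l × Fin l) (w : Fin l → ℝ) :
    dir B ⬝ᵥ w = w B.1 - w B.2 := by
  simp [dir, sub_dotProduct, single_dotProduct]

lemma dir_dotProduct_mulVec_dir (i j : Fin l) :
    dir (i, j) ⬝ᵥ (K *ᵥ dir (i, j)) = K i i - K i j - K j i + K j j := by
  simp [dir, Matrix.mulVec_sub, Matrix.mulVec_single, sub_dotProduct, dotProduct_sub,
    single_dotProduct]
  ring

lemma dir_dotProduct_mulVec_dir_le (hK : K.PosSemidef) (i j : Fin l) :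
    dir (i, j) ⬝ᵥ (K *ᵥ dir (i, j)) ≤ 4 * K.trace := by
  have hsum : 0 ≤ K i i + K i j + K j i + K j j := by
    have h := hK.dotProduct_mulVec_nonneg (Pi.single i 1 + Pi.single j 1)
    simp [Matrix.mulVec_add, Matrix.mulVec_single, add_dotProduct, dotProduct_add,
      single_dotProduct] at h
    linarith
  have hdiag : ∀ k, K k k ≤ K.trace := fun k =>
    Finset.single_le_sum (f := fun k => K k k) (fun k _ => hK.diag_nonneg) (Finset.mem_univ k)
  rw [dir_dotProduct_mulVec_dir]
  linarith [hdiag i, hdiag j]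

lemma obj_eq_add_grad_dotProduct_sub (y : Fin l → ℝ) (hK : K.IsSymm) (α β : Fin l → ℝ) :
    obj y K β = obj y K α + grad y K α ⬝ᵥ (β - α) - (1 / 2) * ((β - α) ⬝ᵥ (K *ᵥ (β - α))) := by
  have hsymm : α ⬝ᵥ (K *ᵥ β) = β ⬝ᵥ (K *ᵥ α) := by
    rw [Matrix.dotProduct_mulVec, ← Matrix.vecMul_transpose, hK.eq, dotProduct_comm]
  simp only [obj, grad, Matrix.mulVec_sub, sub_dotProduct, dotProduct_sub]
  rw [dotProduct_comm (K *ᵥ α) β, dotProduct_comm (K *ᵥ α) α, hsymm]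
  ring

lemma obj_sub_obj_le (y : Fin l → ℝ) (hK : K.PosSemidef) (α β : Fin l → ℝ) :
    obj y K β - obj y K α ≤ grad y K α ⬝ᵥ (β - α) := by
  have h := hK.dotProduct_mulVec_nonneg (β - α)
  rw [star_trivial] at h
  rw [obj_eq_add_grad_dotProduct_sub y (isHermitian_iff_isSymm.mp hK.isHermitian) α β]
  linarith

lemma exists_mem_wsets_fstar_sub_obj_le (y : Fin l → ℝ) (hK : K.PosSemidef) {C : ℝ}
    {α : Fin l → ℝ} (hα : α ∈ feas y C) (hlt : obj y K α < fstar y K C) :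
    ∃ i j, (i, j) ∈ wsets y C α ∧ 0 < grad y K α i - grad y K α j ∧
      fstar y K C - obj y K α ≤
        (∑ k, (ub y C k - lb y C k)) * (grad y K α i - grad y K α j) := by
  obtain ⟨β, hβ, hβf⟩ := fstar_mem_image y K C
  have hconc : fstar y K C - obj y K α ≤ grad y K α ⬝ᵥ (β - α) :=
    hβf ▸ obj_sub_obj_le y hK α β
  have hsum : ∑ k, (β - α) k = 0 := by simp [Finset.sum_sub_distrib, hα.1, hβ.1]
  obtain ⟨i, j, hi, hj, hle⟩ := exists_dotProduct_le_sum_max_mul hsum (by linarith)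
  have hwidth : ∑ k, max ((β - α) k) 0 ≤ ∑ k, (ub y C k - lb y C k) :=
    Finset.sum_le_sum fun k _ =>
      max_le (by rw [Pi.sub_apply]; linarith [(hβ.2 k).2, (hα.2 k).1])
        (by linarith [(hα.2 k).1, (hα.2 k).2])
  have hsnn : 0 ≤ ∑ k, max ((β - α) k) 0 := Finset.sum_nonneg fun k _ => le_max_right _ _
  have hgap : 0 < grad y K α i - grad y K α j := by
    by_contra! h
    linarith [mul_nonpos_of_nonneg_of_nonpos hsnn h]
  simp only [Pi.sub_apply, sub_pos, sub_neg] at hi hj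
  refine ⟨i, j, ⟨hi.trans_le (hβ.2 i).2, (hβ.2 j).1.trans_lt hj, ?_⟩, hgap, ?_⟩
  · intro hij
    change i = j at hij
    subst hij
    linarith
  · linarith [mul_le_mul_of_nonneg_right hwidth hgap.le]

lemma ofReal_le_ngain (y : Fin l → ℝ) (hK : K.PosSemidef) {B : Fin l × Fin l}
    {α : Fin l → ℝ} {x c : ℝ} (hq : dir B ⬝ᵥ (K *ᵥ dir B) ≤ c) (hx : 0 < x)
    (hxg : x ≤ dir B ⬝ᵥ grad y K α) :
    ENNReal.ofReal (x ^ 2 / (2 * c)) ≤ ngain y K B α := by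
  unfold ngain
  split_ifs with hq0 hg0
  · linarith
  · exact le_top
  · have hq_pos : 0 < dir B ⬝ᵥ (K *ᵥ dir B) := by
      refine lt_of_le_of_ne ?_ (Ne.symm hq0)
      simpa using hK.dotProduct_mulVec_nonneg (dir B)
    exact ENNReal.ofReal_le_ofReal <|
      div_le_div₀ (sq_nonneg _) (pow_le_pow_left₀ hx.le hxg 2) (by positivity) (by linarith)

lemma ofReal_le_ngain_of_mem_wsets {y : Fin l → ℝ} {C : ℝ} (hK : K.PosSemidef)
    {W : (Fin l → ℝ) → Fin l × Fin l} (hW : IsSecondOrderWSS y K C W) {α : Fin l → ℝ}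
    (hα : α ∈ feas y C \ opt y K C) {i j : Fin l} (hij : (i, j) ∈ wsets y C α) {x : ℝ}
    (hx : 0 < x) (hxg : x ≤ grad y K α i - grad y K α j) :
    ENNReal.ofReal (x ^ 2 / (2 * (4 * K.trace + 1))) ≤ ngain y K (W α) α := by
  obtain ⟨-, hWup, hWdown⟩ := hW α hα
  have hi : grad y K α i ≤ grad y K α (W α).1 := hWup i hij.1
  have hj : j ≠ (W α).1 := by rintro rfl; linarith
  calc ENNReal.ofReal (x ^ 2 / (2 * (4 * K.trace + 1)))
      ≤ ngain y K ((W α).1, j) α :=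
        ofReal_le_ngain y hK ((dir_dotProduct_mulVec_dir_le hK _ _).trans (by linarith)) hx
          (by rw [dir_dotProduct_s16]; linarith)
    _ ≤ ngain y K (W α) α := hWdown j hij.2.1 hj

lemma exists_pos_ofReal_le_ngain (y : Fin l → ℝ) (hK : K.PosSemidef) {C : ℝ}
    {W : (Fin l → ℝ) → Fin l × Fin l} (hW : IsSecondOrderWSS y K C W) {ε : ℝ} (hε : 0 < ε) :
    ∃ γ > 0, ∀ α ∈ feas y C, ε ≤ fstar y K C - obj y K α →
      ENNReal.ofReal γ ≤ ngain y K (W α) α := by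
  set D := ∑ k, (ub y C k - lb y C k)
  have hD : 0 ≤ D :=
    Finset.sum_nonneg fun k _ => sub_nonneg.2 ((min_le_left _ _).trans (le_max_left _ _))
  refine ⟨(ε / (D + 1)) ^ 2 / (2 * (4 * K.trace + 1)),
    div_pos (by positivity) (by linarith [hK.trace_nonneg]), fun α hα hgap => ?_⟩
  obtain ⟨i, j, hij, hpos, hle⟩ := exists_mem_wsets_fstar_sub_obj_le y hK hα (by linarith)
  have hopt : α ∉ opt y K C := fun h => by linarith [h.2]
  refine ofReal_le_ngain_of_mem_wsets hK hW ⟨hα, hopt⟩ hij (by positivity) ?_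
  rw [div_le_iff₀ (by positivity)]
  nlinarith

end

theorem convergence_double_step_general
    (y : Fin l → ℝ)
    (K : Matrix (Fin l) (Fin l) ℝ) (hK : K.PosSemidef) (C : ℝ)
    (η : ℝ) (hη : η ∈ Set.Ioo (0 : ℝ) 1)
    (W : (Fin l → ℝ) → Fin l × Fin l) (hW : IsSecondOrderWSS y K C W)
    (a : ℕ → Fin l → ℝ) (ha : ∀ t, a t ∈ feas y C)
    (hmono : Monotone fun t => obj y K (a t))
    (hinf : {t : ℕ |
        a t ∉ opt y K C ∧
        ENNReal.ofReal (1 - η ^ 2) * ngain y K (W (a t)) (a t) ≤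
          ENNReal.ofReal (obj y K (a (t + 2)) - obj y K (a t))}.Infinite) :
    Tendsto (fun t => obj y K (a t)) atTop (𝓝 (fstar y K C)) := by
  have hbdd : BddAbove (Set.range fun t => obj y K (a t)) :=
    ⟨fstar y K C, by rintro _ ⟨t, rfl⟩; exact obj_le_fstar y K (ha t)⟩
  have hlim := tendsto_atTop_ciSup hmono hbdd
  suffices hsup : (⨆ t, obj y K (a t)) = fstar y K C from hsup ▸ hlim
  refine (ciSup_le fun t => obj_le_fstar y K (ha t)).antisymm (not_lt.1 fun hlt => ?_)
  obtain ⟨γ, hγ, hgain⟩ := exists_pos_ofReal_le_ngain y hK hW (sub_pos.2 hlt)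
  have hη2 : 0 < 1 - η ^ 2 := by nlinarith [hη.1, hη.2]
  refine hinf ((finite_setOf_le_sub_of_tendsto hlim (mul_pos hη2 hγ) 2).subset fun t ht => ?_)
  have hγt := hgain (a t) (ha t) (by linarith [le_ciSup hbdd t])
  have hstep : ENNReal.ofReal ((1 - η ^ 2) * γ) ≤
      ENNReal.ofReal (obj y K (a (t + 2)) - obj y K (a t)) := by
    rw [ENNReal.ofReal_mul hη2.le]
    exact (mul_le_mul_right hγt _).trans ht.2
  exact (ENNReal.ofReal_le_ofReal_iff'.1 hstep).resolve_right (mul_pos hη2 hγ).not_ge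

/-- If `η ∈ (0,1)`, `(f(α^(t)))` is monotonically increasing, and there
are infinitely many `t` with `α^(t) ∉ R*` such that the double-step gain satisfies
`f(α^(t+2)) − f(α^(t)) ≥ (1 − η²) · g̃_W(α^(t))` (inequality in `[0, ∞]`), then
`f(α^(t)) → f*`. -/
theorem convergence_double_step
    (hl : 2 ≤ l) (y : Fin l → ℝ) (hy : ∀ i, y i = 1 ∨ y i = -1)
    (K : Matrix (Fin l) (Fin l) ℝ) (hK : K.PosSemidef) (C : ℝ) (hC : 0 < C)
    (η : ℝ) (hη : η ∈ Set.Ioo (0 : ℝ) 1)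
    (W : (Fin l → ℝ) → Fin l × Fin l) (hW : IsSecondOrderWSS y K C W)
    (a : ℕ → Fin l → ℝ) (ha : ∀ t, a t ∈ feas y C)
    (hmono : Monotone fun t => obj y K (a t))
    (hinf : {t : ℕ |
        a t ∉ opt y K C ∧
        ENNReal.ofReal (1 - η ^ 2) * ngain y K (W (a t)) (a t) ≤
          ENNReal.ofReal (obj y K (a (t + 2)) - obj y K (a t))}.Infinite) :
    Tendsto (fun t => obj y K (a t)) atTop (𝓝 (fstar y K C)) :=
  convergence_double_step_general y K hK C η hη W hW a ha hmono hinf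

end

end SMO
end
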